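/- Assume K has symmetric support. For all o, x ∈ 𝒳 and all t ≥ diam(𝒳)/4, we have −c·diam(𝒳) ≤ log(P_t(o,x)/π(x)) ≤ log(1/p), where c = 3 log(e/δ), δ is the smallest non-zero entry of K, and p = min_x π(x). -/

import Mathlib

open scoped Classical

noncomputable section

/-- `n`-th power of a kernel `K` on a finite set. -/
def matPow {X : Type*} [Fintype X] [DecidableEq X] (K : X → X → ℝ) : ℕ → X → X → ℝ
  | 0 => fun x y => if x = y then 1 else 0
  | n + 1 => fun x y => ∑ z, matPow K n x z * K z y

/-- `K` is a stochastic matrix with entries in `[0,1]` and rows summing to `1`. -/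
def IsStochastic {X : Type*} [Fintype X] (K : X → X → ℝ) : Prop :=
  (∀ x y, 0 ≤ K x y ∧ K x y ≤ 1) ∧ ∀ x, ∑ y, K x y = 1

/-- Irreducibility: any state can be reached from any state. -/
def IsIrreducibleMatrix {X : Type*} [Fintype X] [DecidableEq X] (K : X → X → ℝ) : Prop :=
  ∀ x y, ∃ n : ℕ, 0 < matPow K n x y

/-- `π` is the (positive) stationary probability vector of `K`. -/
def IsStationaryProb {X : Type*} [Fintype X] (K : X → X → ℝ) (π : X → ℝ) : Prop :=
  (∀ x, 0 < π x) ∧ (∑ x, π x = 1) ∧ ∀ y, ∑ x, π x * K x y = π y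

/-- A probability vector on a finite set. -/
def IsProbVector {X : Type*} [Fintype X] (μ : X → ℝ) : Prop :=
  (∀ x, 0 ≤ μ x) ∧ ∑ x, μ x = 1

/-- Continuous-time heat kernel `P_t(x,y) = e^{-t} ∑ t^n/n! Kⁿ(x,y)`. -/
def heatKernel {X : Type*} [Fintype X] [DecidableEq X] (K : X → X → ℝ) (t : ℝ) (x y : X) : ℝ :=
  Real.exp (-t) * ∑' n : ℕ, t ^ n / (Nat.factorial n : ℝ) * matPow K n x y

/-- Total variation distance between two vectors. -/
def dTV {X : Type*} [Fintype X] (μ ν : X → ℝ) : ℝ := (∑ x, |μ x - ν x|) / 2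

/-- Relative entropy (Kullback–Leibler divergence). -/
def dKL {X : Type*} [Fintype X] (μ ν : X → ℝ) : ℝ := ∑ x, μ x * Real.log (μ x / ν x)

/-- Varentropy. -/
def varKL {X : Type*} [Fintype X] (μ ν : X → ℝ) : ℝ :=
  ∑ x, μ x * (Real.log (μ x / ν x) - dKL μ ν) ^ 2

/-- Worst-case total variation distance to equilibrium at time `t`. -/
def worstTV {X : Type*} [Fintype X] [DecidableEq X] (K : X → X → ℝ) (π : X → ℝ) (t : ℝ) : ℝ :=
  sSup {v : ℝ | ∃ o : X, v = dTV (heatKernel K t o) π}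

/-- Worst-case relative entropy to equilibrium at time `t`. -/
def worstKL {X : Type*} [Fintype X] [DecidableEq X] (K : X → X → ℝ) (π : X → ℝ) (t : ℝ) : ℝ :=
  sSup {v : ℝ | ∃ o : X, v = dKL (heatKernel K t o) π}

/-- Worst-case varentropy at time `t`. -/
def worstVar {X : Type*} [Fintype X] [DecidableEq X] (K : X → X → ℝ) (π : X → ℝ) (t : ℝ) : ℝ :=
  sSup {v : ℝ | ∃ o : X, v = varKL (heatKernel K t o) π}

/-- Mixing time: first time the worst-case TV distance drops below `ε`. -/
def mixingTime {X : Type*} [Fintype X] [DecidableEq X] (K : X → X → ℝ) (π : X → ℝ) (ε : ℝ) : ℝ :=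
  sInf {t : ℝ | 0 ≤ t ∧ worstTV K π t ≤ ε}

/-- Variance of `f` with respect to `π`. -/
def varPi {X : Type*} [Fintype X] (π f : X → ℝ) : ℝ :=
  ∑ x, π x * (f x - ∑ y, π y * f y) ^ 2

/-- Poincaré constant: the largest `γ` with `γ·Var_π(f) ≤ (1/2)∑ π(x)K(x,y)(f(x)-f(y))²`. -/
def poincare {X : Type*} [Fintype X] (K : X → X → ℝ) (π : X → ℝ) : ℝ :=
  sSup {γ : ℝ | ∀ f : X → ℝ, γ * varPi π f ≤ (∑ x, ∑ y, π x * K x y * (f x - f y) ^ 2) / 2}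

/-- Smallest non-zero entry of `K`. -/
def minEntry {X : Type*} [Fintype X] (K : X → X → ℝ) : ℝ :=
  sInf {v : ℝ | (∃ x y, v = K x y) ∧ 0 < v}

/-- Smallest stationary probability `p = min_x π(x)`. -/
def statMin {X : Type*} [Fintype X] (π : X → ℝ) : ℝ :=
  sInf {v : ℝ | ∃ x, v = π x}

/-- The support of `K` is symmetric. -/
def SymmSupport {X : Type*} (K : X → X → ℝ) : Prop :=
  ∀ x y, 0 < K x y → 0 < K y x

/-- Graph distance associated with the support of `K`. -/
def mdist {X : Type*} [Fintype X] [DecidableEq X] (K : X → X → ℝ) (x y : X) : ℕ :=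
  sInf {n : ℕ | 0 < matPow K n x y}

/-- Diameter of the state space for the distance `mdist`. -/
def mdiam {X : Type*} [Fintype X] [DecidableEq X] (K : X → X → ℝ) : ℕ :=
  Finset.sup Finset.univ fun p : X × X => mdist K p.1 p.2

/-- Lipschitz norm of `f` with respect to `mdist`. -/
def lipNorm {X : Type*} [Fintype X] [DecidableEq X] (K : X → X → ℝ) (f : X → ℝ) : ℝ :=
  sSup {v : ℝ | ∃ x y, x ≠ y ∧ v = |f x - f y| / (mdist K x y : ℝ)}

/-!
The upper bound is `P_t(o,x) ≤ 1` together with `π x ≥ p`. For the lower bound write `t = s + (t - s)`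
with `s = D/4`, `D = diam`. Stationarity makes `π x` a `π`-average of `z ↦ P_{t-s}(z,x)`, so some `z`
has `P_{t-s}(z,x) ≥ π x`, and the semigroup inequality `P_t(o,x) ≥ P_s(o,z) P_{t-s}(z,x)` leaves
`P_s(o,z)`. Keeping only the term `n = d := dist(o,z) ≤ D` of its series gives
`P_s(o,z) ≥ e^{-s} s^d δ^d / d!`, and `d! ≤ D^d`, `4 ≤ e^{11/4}` bound this below by `(δ/e)^{3D}`.
-/

open Finset

section Stochastic

variable {X : Type*} [Fintype X] {K : X → X → ℝ}

lemma IsStochastic.exists_pos (hK : IsStochastic K) (x : X) : ∃ y, 0 < K x y := by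
  obtain ⟨y, -, hy⟩ := exists_lt_of_sum_lt (s := univ) (f := 0) (g := K x) (by simp [hK.2 x])
  exact ⟨y, hy⟩

lemma minEntry_le {x y : X} (hxy : 0 < K x y) : minEntry K ≤ K x y :=
  csInf_le ⟨0, fun _ hv => hv.2.le⟩ ⟨⟨x, y, rfl⟩, hxy⟩

lemma minEntry_pos [Nonempty X] (hK : IsStochastic K) : 0 < minEntry K := by
  obtain ⟨x⟩ := ‹Nonempty X›
  obtain ⟨y, hy⟩ := hK.exists_pos x
  have hne : {v : ℝ | (∃ x y, v = K x y) ∧ 0 < v}.Nonempty := ⟨K x y, ⟨x, y, rfl⟩, hy⟩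
  have hfin : {v : ℝ | (∃ x y, v = K x y) ∧ 0 < v}.Finite :=
    (Set.finite_range (Function.uncurry K)).subset fun _ ⟨⟨x, y, hv⟩, _⟩ => ⟨(x, y), hv.symm⟩
  exact (hne.csInf_mem hfin).2

lemma minEntry_le_one [Nonempty X] (hK : IsStochastic K) : minEntry K ≤ 1 := by
  obtain ⟨x⟩ := ‹Nonempty X›
  obtain ⟨y, hy⟩ := hK.exists_pos x
  exact (minEntry_le hy).trans (hK.1 x y).2

lemma statMin_eq_iInf (π : X → ℝ) : statMin π = ⨅ x, π x := by
  rw [← sInf_range, statMin]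
  congr 1
  ext v
  simp [eq_comm]

lemma statMin_le (π : X → ℝ) (x : X) : statMin π ≤ π x :=
  statMin_eq_iInf π ▸ ciInf_le (Set.finite_range π).bddBelow x

lemma statMin_pos [Nonempty X] {π : X → ℝ} (hπ : ∀ x, 0 < π x) : 0 < statMin π := by
  obtain ⟨x, hx⟩ := exists_eq_ciInf_of_finite (f := π)
  rw [statMin_eq_iInf, ← hx]
  exact hπ x

variable [DecidableEq X]

lemma matPow_eq_pow (K : X → X → ℝ) (n : ℕ) : matPow K n = Matrix.of K ^ n := by
  induction n with
  | zero => ext x y; simp [matPow, Matrix.one_apply]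
  | succ n ih => ext x y; rw [pow_succ, Matrix.mul_apply, ← ih]; rfl

lemma matPow_add (K : X → X → ℝ) (a b : ℕ) (x y : X) :
    matPow K (a + b) x y = ∑ z, matPow K a x z * matPow K b z y := by
  simp only [matPow_eq_pow, pow_add, Matrix.mul_apply]

lemma matPow_nonneg (hK : IsStochastic K) (n : ℕ) (x y : X) : 0 ≤ matPow K n x y := by
  induction n generalizing y with
  | zero => unfold matPow; positivity
  | succ n ih => exact sum_nonneg fun z _ => mul_nonneg (ih z) (hK.1 z y).1

lemma sum_matPow (hK : IsStochastic K) (n : ℕ) (x : X) : ∑ y, matPow K n x y = 1 := by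
  induction n with
  | zero => simp [matPow]
  | succ n ih =>
    show ∑ y, ∑ z, matPow K n x z * K z y = 1
    rw [sum_comm]
    simp only [← mul_sum, hK.2, mul_one, ih]

lemma matPow_le_one (hK : IsStochastic K) (n : ℕ) (x y : X) : matPow K n x y ≤ 1 :=
  (single_le_sum (fun z _ => matPow_nonneg hK n x z) (mem_univ y)).trans_eq (sum_matPow hK n x)

lemma matPow_mul_le (hK : IsStochastic K) (a b : ℕ) (x z y : X) :
    matPow K a x z * matPow K b z y ≤ matPow K (a + b) x y := by
  rw [matPow_add]
  exact single_le_sum (f := fun w => matPow K a x w * matPow K b w y)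
    (fun w _ => mul_nonneg (matPow_nonneg hK a x w) (matPow_nonneg hK b w y)) (mem_univ z)

lemma sum_mul_matPow {π : X → ℝ} (hπ : IsStationaryProb K π) (n : ℕ) (y : X) :
    ∑ x, π x * matPow K n x y = π y := by
  induction n generalizing y with
  | zero => simp [matPow]
  | succ n ih =>
    calc ∑ x, π x * ∑ z, matPow K n x z * K z y = ∑ z, (∑ x, π x * matPow K n x z) * K z y := by
          simp only [mul_sum, sum_mul, mul_assoc]; exact sum_comm
      _ = π y := by simp only [ih, hπ.2.2]

lemma minEntry_pow_le_matPow (hK : IsStochastic K) {n : ℕ} {x y : X}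
    (h : 0 < matPow K n x y) : minEntry K ^ n ≤ matPow K n x y := by
  have : Nonempty X := ⟨x⟩
  induction n generalizing y with
  | zero =>
    obtain rfl : x = y := by by_contra hxy; simp [matPow, hxy] at h
    simp [matPow]
  | succ n ih =>
    have hterm (z : X) : 0 ≤ matPow K n x z * K z y :=
      mul_nonneg (matPow_nonneg hK n x z) (hK.1 z y).1
    obtain ⟨z, -, hz⟩ := (sum_pos_iff_of_nonneg fun z _ => hterm z).1 h
    calc minEntry K ^ (n + 1) = minEntry K ^ n * minEntry K := pow_succ _ _
      _ ≤ matPow K n x z * K z y :=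
        mul_le_mul (ih (pos_of_mul_pos_left hz (hK.1 z y).1))
          (minEntry_le (pos_of_mul_pos_right hz (matPow_nonneg hK n x z)))
          (minEntry_pos hK).le (matPow_nonneg hK n x z)
      _ ≤ matPow K (n + 1) x y := single_le_sum (fun w _ => hterm w) (mem_univ z)

lemma matPow_mdist_pos (hirr : IsIrreducibleMatrix K) (x y : X) :
    0 < matPow K (mdist K x y) x y :=
  Nat.sInf_mem (hirr x y)

lemma mdist_le_mdiam (K : X → X → ℝ) (x y : X) : mdist K x y ≤ mdiam K :=
  le_sup (f := fun p : X × X => mdist K p.1 p.2) (mem_univ (x, y))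

end Stochastic

lemma hasSum_pow_div_factorial (t : ℝ) :
    HasSum (fun n : ℕ => t ^ n / (Nat.factorial n : ℝ)) (Real.exp t) := by
  simpa [Real.exp_eq_exp_ℝ] using NormedSpace.expSeries_div_hasSum_exp t

lemma sum_antidiagonal_pow_div_factorial (s u : ℝ) (n : ℕ) :
    ∑ kl ∈ antidiagonal n, s ^ kl.1 / (Nat.factorial kl.1 : ℝ) *
      (u ^ kl.2 / (Nat.factorial kl.2 : ℝ)) = (s + u) ^ n / (Nat.factorial n : ℝ) := by
  rw [(Commute.all s u).add_pow', sum_div]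
  refine sum_congr rfl fun kl hkl => ?_
  rw [← mem_antidiagonal.mp hkl, nsmul_eq_mul, Nat.cast_add_choose]
  field_simp

section HeatKernel

variable {X : Type*} [Fintype X] [DecidableEq X] {K : X → X → ℝ}

lemma summable_heatKernel_series (hK : IsStochastic K) (t : ℝ) (x y : X) :
    Summable fun n : ℕ => t ^ n / (Nat.factorial n : ℝ) * matPow K n x y := by
  refine (Real.summable_pow_div_factorial |t|).of_norm_bounded fun n => ?_
  rw [norm_mul, norm_div, norm_pow, Real.norm_eq_abs, Real.norm_natCast,
    Real.norm_of_nonneg (matPow_nonneg hK n x y)]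
  exact mul_le_of_le_one_right (by positivity) (matPow_le_one hK n x y)

lemma heatKernel_nonneg (hK : IsStochastic K) {t : ℝ} (ht : 0 ≤ t) (x y : X) :
    0 ≤ heatKernel K t x y :=
  mul_nonneg (Real.exp_nonneg _)
    (tsum_nonneg fun n => mul_nonneg (by positivity) (matPow_nonneg hK n x y))

lemma term_le_heatKernel (hK : IsStochastic K) {t : ℝ} (ht : 0 ≤ t) (x y : X) (n : ℕ) :
    Real.exp (-t) * (t ^ n / (Nat.factorial n : ℝ) * matPow K n x y) ≤ heatKernel K t x y :=
  mul_le_mul_of_nonneg_left ((summable_heatKernel_series hK t x y).le_tsum n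
    fun m _ => mul_nonneg (by positivity) (matPow_nonneg hK m x y)) (Real.exp_nonneg _)

lemma heatKernel_le_one (hK : IsStochastic K) {t : ℝ} (ht : 0 ≤ t) (x y : X) :
    heatKernel K t x y ≤ 1 := by
  have hsum : ∑' n : ℕ, t ^ n / (Nat.factorial n : ℝ) * matPow K n x y ≤ Real.exp t :=
    hasSum_le (fun n => mul_le_of_le_one_right (by positivity) (matPow_le_one hK n x y))
      (summable_heatKernel_series hK t x y).hasSum (hasSum_pow_div_factorial t)
  calc heatKernel K t x y ≤ Real.exp (-t) * Real.exp t :=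
        mul_le_mul_of_nonneg_left hsum (Real.exp_nonneg _)
    _ = 1 := by rw [← Real.exp_add, neg_add_cancel, Real.exp_zero]

lemma sum_mul_heatKernel {π : X → ℝ} (hK : IsStochastic K) (hπ : IsStationaryProb K π)
    (t : ℝ) (y : X) : ∑ z, π z * heatKernel K t z y = π y := by
  have hsum : HasSum (fun n : ℕ => ∑ z, π z * (t ^ n / (Nat.factorial n : ℝ) * matPow K n z y))
      (∑ z, π z * ∑' n : ℕ, t ^ n / (Nat.factorial n : ℝ) * matPow K n z y) :=
    hasSum_sum fun z _ => (summable_heatKernel_series hK t z y).hasSum.mul_left (π z)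
  have hterm (n : ℕ) : ∑ z, π z * (t ^ n / (Nat.factorial n : ℝ) * matPow K n z y) =
      t ^ n / (Nat.factorial n : ℝ) * π y := by
    rw [← sum_mul_matPow hπ n y, mul_sum]
    exact sum_congr rfl fun z _ => by ring
  simp only [hterm] at hsum
  calc ∑ z, π z * heatKernel K t z y =
        Real.exp (-t) * ∑ z, π z * ∑' n : ℕ, t ^ n / (Nat.factorial n : ℝ) * matPow K n z y := by
        rw [mul_sum]
        exact sum_congr rfl fun z _ => by rw [heatKernel]; ring
    _ = Real.exp (-t) * (Real.exp t * π y) := by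
        rw [hsum.unique ((hasSum_pow_div_factorial t).mul_right (π y))]
    _ = π y := by rw [← mul_assoc, ← Real.exp_add, neg_add_cancel, Real.exp_zero, one_mul]

lemma heatKernel_mul_le_heatKernel_add (hK : IsStochastic K) {s u : ℝ} (hs : 0 ≤ s) (hu : 0 ≤ u)
    (x z y : X) : heatKernel K s x z * heatKernel K u z y ≤ heatKernel K (s + u) x y := by
  set f := fun a : ℕ => s ^ a / (Nat.factorial a : ℝ) * matPow K a x z
  set g := fun b : ℕ => u ^ b / (Nat.factorial b : ℝ) * matPow K b z y
  have hf : Summable fun a => ‖f a‖ := summable_norm_iff.2 (summable_heatKernel_series hK s x z)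
  have hg : Summable fun b => ‖g b‖ := summable_norm_iff.2 (summable_heatKernel_series hK u z y)
  have hcoeff (n : ℕ) : ∑ kl ∈ antidiagonal n, f kl.1 * g kl.2 ≤
      (s + u) ^ n / (Nat.factorial n : ℝ) * matPow K n x y := by
    rw [← sum_antidiagonal_pow_div_factorial, sum_mul]
    refine sum_le_sum fun kl hkl => ?_
    calc f kl.1 * g kl.2 = s ^ kl.1 / (Nat.factorial kl.1 : ℝ) *
          (u ^ kl.2 / (Nat.factorial kl.2 : ℝ)) * (matPow K kl.1 x z * matPow K kl.2 z y) := by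
          simp only [f, g]; ring
      _ ≤ _ := by
        rw [← mem_antidiagonal.mp hkl]
        exact mul_le_mul_of_nonneg_left (matPow_mul_le hK _ _ x z y) (by positivity)
  calc heatKernel K s x z * heatKernel K u z y =
        Real.exp (-(s + u)) * ∑' n, ∑ kl ∈ antidiagonal n, f kl.1 * g kl.2 := by
        rw [heatKernel, heatKernel, ← tsum_mul_tsum_eq_tsum_sum_antidiagonal_of_summable_norm hf hg,
          neg_add, Real.exp_add]
        ring
    _ ≤ heatKernel K (s + u) x y :=
        mul_le_mul_of_nonneg_left (Summable.tsum_le_tsum hcoeff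
          (summable_norm_sum_mul_antidiagonal_of_summable_norm hf hg).of_norm
          (summable_heatKernel_series hK _ x y)) (Real.exp_nonneg _)

lemma exists_heatKernel_mul_le {π : X → ℝ} (hK : IsStochastic K) (hπ : IsStationaryProb K π)
    {s t : ℝ} (hs : 0 ≤ s) (hst : s ≤ t) (o x : X) :
    ∃ z, heatKernel K s o z * π x ≤ heatKernel K t o x := by
  obtain ⟨z, -, hz⟩ : ∃ z ∈ univ, π z * π x ≤ π z * heatKernel K (t - s) z x :=
    exists_le_of_sum_le ⟨o, mem_univ o⟩
      (by rw [← sum_mul, hπ.2.1, one_mul, sum_mul_heatKernel hK hπ])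
  refine ⟨z, ?_⟩
  calc heatKernel K s o z * π x ≤ heatKernel K s o z * heatKernel K (t - s) z x :=
        mul_le_mul_of_nonneg_left (le_of_mul_le_mul_left hz (hπ.1 z)) (heatKernel_nonneg hK hs o z)
    _ ≤ heatKernel K (s + (t - s)) o x :=
        heatKernel_mul_le_heatKernel_add hK hs (sub_nonneg.2 hst) o z x
    _ = heatKernel K t o x := by rw [add_sub_cancel]

lemma exp_neg_mul_minEntry_pow_le_heatKernel (hK : IsStochastic K) {s : ℝ} (hs : 0 ≤ s)
    {n : ℕ} {x y : X} (h : 0 < matPow K n x y) :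
    Real.exp (-s) * (s ^ n / (Nat.factorial n : ℝ) * minEntry K ^ n) ≤ heatKernel K s x y :=
  le_trans (by gcongr; exact minEntry_pow_le_matPow hK h) (term_le_heatKernel hK hs x y n)

end HeatKernel

lemma inv_four_pow_le_pow_div_factorial {d D : ℕ} (h : d ≤ D) :
    ((4 : ℝ) ^ D)⁻¹ ≤ ((D : ℝ) / 4) ^ d / (Nat.factorial d : ℝ) := by
  have hfact : (Nat.factorial d : ℝ) ≤ (D : ℝ) ^ d := by
    exact_mod_cast (Nat.factorial_le_pow d).trans (Nat.pow_le_pow_left h d)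
  calc ((4 : ℝ) ^ D)⁻¹ ≤ ((4 : ℝ) ^ d)⁻¹ :=
        inv_anti₀ (by positivity) (pow_le_pow_right₀ (by norm_num) h)
    _ ≤ ((4 : ℝ) ^ d)⁻¹ * ((D : ℝ) ^ d / (Nat.factorial d : ℝ)) :=
        le_mul_of_one_le_right (by positivity) ((one_le_div (by positivity)).2 hfact)
    _ = ((D : ℝ) / 4) ^ d / (Nat.factorial d : ℝ) := by rw [div_pow]; ring

lemma exp_neg_three_mul_log_mul_le {δ : ℝ} (hδ0 : 0 < δ) (hδ1 : δ ≤ 1) {d D : ℕ} (h : d ≤ D) :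
    Real.exp (-(3 * Real.log (Real.exp 1 / δ)) * D) ≤
      Real.exp (-(D / 4)) * (((D : ℝ) / 4) ^ d / (Nat.factorial d : ℝ) * δ ^ d) := by
  have h4 : (4 : ℝ) ^ D ≤ Real.exp (3 * D - D / 4) :=
    calc (4 : ℝ) ^ D ≤ Real.exp 2 ^ D := by
          gcongr
          have := Real.add_one_le_exp 1
          rw [show (2 : ℝ) = 1 + 1 by norm_num, Real.exp_add]
          nlinarith
      _ = Real.exp (2 * D) := by rw [← Real.exp_nat_mul, mul_comm]
      _ ≤ Real.exp (3 * D - D / 4) := Real.exp_le_exp.2 (by linarith [D.cast_nonneg (α := ℝ)])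
  have hexponent : -(3 * Real.log (Real.exp 1 / δ)) * D =
      -(D / 4) - (3 * D - D / 4) + ((3 * D : ℕ) : ℝ) * Real.log δ := by
    rw [Real.log_div (Real.exp_ne_zero 1) hδ0.ne', Real.log_exp]
    push_cast
    ring
  calc Real.exp (-(3 * Real.log (Real.exp 1 / δ)) * D)
        = Real.exp (-(D / 4)) * (Real.exp (3 * D - D / 4))⁻¹ * δ ^ (3 * D) := by
        rw [hexponent, Real.exp_add, Real.exp_sub, Real.exp_nat_mul, Real.exp_log hδ0,
          div_eq_mul_inv]
    _ ≤ Real.exp (-(D / 4)) * ((4 : ℝ) ^ D)⁻¹ * δ ^ d :=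
        mul_le_mul (mul_le_mul_of_nonneg_left (inv_anti₀ (by positivity) h4) (Real.exp_nonneg _))
          (pow_le_pow_of_le_one hδ0.le hδ1 (by omega)) (by positivity) (by positivity)
    _ ≤ Real.exp (-(D / 4)) * (((D : ℝ) / 4) ^ d / (Nat.factorial d : ℝ) * δ ^ d) := by
        rw [← mul_assoc]
        gcongr
        exact inv_four_pow_le_pow_div_factorial h

theorem stmt_10_general {X : Type*} [Fintype X] [DecidableEq X]
    (K : X → X → ℝ) (π : X → ℝ)
    (hK : IsStochastic K) (hirr : IsIrreducibleMatrix K) (hπ : IsStationaryProb K π)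
    (o x : X) (t : ℝ) (ht : (mdiam K : ℝ) / 4 ≤ t) :
    -(3 * Real.log (Real.exp 1 / minEntry K)) * (mdiam K : ℝ) ≤
        Real.log (heatKernel K t o x / π x) ∧
      Real.log (heatKernel K t o x / π x) ≤ Real.log (1 / statMin π) := by
  have : Nonempty X := ⟨o⟩
  have hs : (0 : ℝ) ≤ mdiam K / 4 := by positivity
  obtain ⟨z, hz⟩ := exists_heatKernel_mul_le hK hπ hs ht o x
  have hlower : Real.exp (-(3 * Real.log (Real.exp 1 / minEntry K)) * mdiam K) ≤
      heatKernel K t o x / π x := by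
    rw [le_div_iff₀ (hπ.1 x)]
    refine le_trans (mul_le_mul_of_nonneg_right ?_ (hπ.1 x).le) hz
    exact (exp_neg_three_mul_log_mul_le (minEntry_pos hK) (minEntry_le_one hK) (mdist_le_mdiam K o z)).trans
      (exp_neg_mul_minEntry_pow_le_heatKernel hK hs (matPow_mdist_pos hirr o z))
  have hratio : 0 < heatKernel K t o x / π x := (Real.exp_pos _).trans_le hlower
  refine ⟨(Real.le_log_iff_exp_le hratio).2 hlower, Real.log_le_log hratio ?_⟩
  exact div_le_div₀ zero_le_one (heatKernel_le_one hK (hs.trans ht) o x) (statMin_pos hπ.1)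
    (statMin_le π x)

/-- Uniform heat-kernel estimate. -/
theorem stmt_10 {X : Type*} [Fintype X] [DecidableEq X]
    (hcard : 2 ≤ Fintype.card X)
    (K : X → X → ℝ) (π : X → ℝ)
    (hK : IsStochastic K) (hirr : IsIrreducibleMatrix K) (hπ : IsStationaryProb K π)
    (hsym : SymmSupport K)
    (o x : X) (t : ℝ) (ht : (mdiam K : ℝ) / 4 ≤ t) :
    -(3 * Real.log (Real.exp 1 / minEntry K)) * (mdiam K : ℝ) ≤
        Real.log (heatKernel K t o x / π x) ∧
      Real.log (heatKernel K t o x / π x) ≤ Real.log (1 / statMin π) :=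
  stmt_10_general K π hK hirr hπ o x t ht
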